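/- Fix positive reals ν_a, ν_o, h_a, h_o, α_c, ε and set θ = 0. For real t ≠ 0 define χ_j(t) = i·t·h_j²/ν_j, λ_j(t) = (χ_j(t) − √(χ_j(t))·√(χ_j(t)+4))/2 (principal complex square root, j ∈ {a,o}), and the convergence factor ξ(t) = |(1 + ε·h_a·λ_o(t)/(h_o·λ_a(t))) / (ν_a·χ_a(t)/(α_c·h_a·λ_a(t)))|. Then ξ(t) tends to +∞ as t → 0 with t ≠ 0 (i.e. for θ = 0 the algorithm diverges quickly at low frequencies). -/

import Mathlib

open Filter Topology

/-- Principal complex square root. -/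
noncomputable def csqrt (z : ℂ) : ℂ := z ^ ((1 : ℂ) / 2)

/-- `λ(χ) = (χ − √χ·√(χ+4))/2`. -/
noncomputable def lamM (χ : ℂ) : ℂ := (χ - csqrt χ * csqrt (χ + 4)) / 2

/-- `χ_j(t) = i·t·h_j²/ν_j`. -/
noncomputable def chi (h ν t : ℝ) : ℂ := Complex.I * t * (h : ℂ) ^ 2 / (ν : ℂ)

/-- The SWR convergence factor for `θ = 0`:
`ξ(t) = |(1 + ε·h_a·λ_o/(h_o·λ_a)) / (ν_a·χ_a/(α_c·h_a·λ_a))|`. -/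
noncomputable def xiZero (νa νo ha ho αc ε : ℝ) (t : ℝ) : ℝ :=
  ‖(1 + (ε : ℂ) * (ha : ℂ) * lamM (chi ho νo t)
      / ((ho : ℂ) * lamM (chi ha νa t)))
    / ((νa : ℂ) * chi ha νa t / ((αc : ℂ) * (ha : ℂ) * lamM (chi ha νa t)))‖

lemma csqrt_mul_self (z : ℂ) : csqrt z * csqrt z = z := by
  rcases eq_or_ne z 0 with rfl | hz
  · simp [csqrt, Complex.zero_cpow (by norm_num : (1:ℂ)/2 ≠ 0)]
  · rw [csqrt, ← Complex.cpow_add _ _ hz]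
    norm_num

lemma csqrt_ne_zero {z : ℂ} (hz : z ≠ 0) : csqrt z ≠ 0 := by
  intro h
  apply hz
  rw [← csqrt_mul_self z, h, mul_zero]

lemma csqrt_ofReal_mul {r : ℝ} (hr : 0 < r) {z : ℂ} (hz : z ≠ 0) :
    csqrt ((r : ℂ) * z) = (Real.sqrt r : ℂ) * csqrt z := by
  have hr' : (r : ℂ) ≠ 0 := by exact_mod_cast hr.ne'
  rw [csqrt, csqrt, Complex.cpow_def_of_ne_zero (mul_ne_zero hr' hz),
    Complex.cpow_def_of_ne_zero hz, Complex.log_ofReal_mul hr hz, add_mul, Complex.exp_add]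
  congr 1
  have h1 : ((Real.log r : ℂ)) * ((1:ℂ)/2) = ((Real.log r * (1/2) : ℝ) : ℂ) := by push_cast; ring
  rw [h1, ← Complex.ofReal_exp, ← Real.rpow_def_of_pos hr, ← Real.sqrt_eq_rpow]

lemma lamM_ne_zero {χ : ℂ} (hχ : χ ≠ 0) : lamM χ ≠ 0 := by
  intro h
  have h1 : χ = csqrt χ * csqrt (χ + 4) := by
    have h' : χ - csqrt χ * csqrt (χ + 4) = 0 := by
      have := h
      unfold lamM at this
      field_simp at this
      linear_combination this
    linear_combination h'
  have h2 : χ * χ = χ * (χ + 4) := by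
    calc χ * χ = (csqrt χ * csqrt (χ+4)) * (csqrt χ * csqrt (χ+4)) := by rw [← h1]
    _ = (csqrt χ * csqrt χ) * (csqrt (χ+4) * csqrt (χ+4)) := by ring
    _ = χ * (χ + 4) := by rw [csqrt_mul_self, csqrt_mul_self]
  apply hχ
  linear_combination (-(1:ℂ)/4) * h2

/-- `P c z = c z − √c · √(c z² + 4)`, so that `lamM (c·it) = s · P c s / 2` with `s = √(it)`. -/
noncomputable def Pc (c : ℝ) (z : ℂ) : ℂ :=
  (c : ℂ) * z - (Real.sqrt c : ℂ) * csqrt ((c : ℂ) * z ^ 2 + 4)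

lemma csqrt_four : csqrt 4 = 2 := by
  have h1 : ((4:ℝ) ^ ((1:ℝ)/2) : ℝ) = 2 := by
    rw [← Real.sqrt_eq_rpow, show (4:ℝ) = 2^2 by norm_num, Real.sqrt_sq (by norm_num : (0:ℝ) ≤ 2)]
  have h2 : ((( (4:ℝ) ^ ((1:ℝ)/2) : ℝ)) : ℂ) = (4:ℂ) ^ (((1:ℝ)/2 : ℝ) : ℂ) := by
    exact_mod_cast Complex.ofReal_cpow (by norm_num : (0:ℝ) ≤ 4) (1/2)
  rw [csqrt, show ((1:ℂ)/2) = (((1:ℝ)/2 : ℝ) : ℂ) by norm_num, ← h2, h1]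
  norm_num

lemma Pc_zero (c : ℝ) : Pc c 0 = -((2 * Real.sqrt c : ℝ) : ℂ) := by
  have h4 : ((c : ℂ) * 0 ^ 2 + 4) = 4 := by ring
  rw [Pc, h4, csqrt_four]
  push_cast
  ring

lemma Pc_continuousAt (c : ℝ) : ContinuousAt (Pc c) 0 := by
  have hmem : ((c : ℂ) * (0:ℂ) ^ 2 + 4) ∈ Complex.slitPlane := by
    simp [Complex.mem_slitPlane_iff]
  have hinner : ContinuousAt (fun z : ℂ => (c : ℂ) * z ^ 2 + 4) 0 := by fun_prop
  have hcomp : ContinuousAt (fun z : ℂ => csqrt ((c : ℂ) * z ^ 2 + 4)) 0 := by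
    have h4 : ContinuousAt (fun w : ℂ => w ^ ((1:ℂ)/2)) ((c : ℂ) * (0:ℂ) ^ 2 + 4) :=
      continuousAt_cpow_const hmem
    exact ContinuousAt.comp (f := fun z : ℂ => (c : ℂ) * z ^ 2 + 4) h4 hinner
  unfold Pc
  exact ((continuousAt_id.const_mul _)).sub (hcomp.const_mul _)

lemma lamM_eq {c : ℝ} (hc : 0 < c) {t : ℝ} (ht : t ≠ 0) :
    lamM ((c : ℂ) * (Complex.I * t)) =
      csqrt (Complex.I * t) * Pc c (csqrt (Complex.I * t)) / 2 := by
  have hIt : Complex.I * (t : ℂ) ≠ 0 :=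
    mul_ne_zero Complex.I_ne_zero (by exact_mod_cast ht)
  rw [lamM, Pc, csqrt_ofReal_mul hc hIt]
  set s := csqrt (Complex.I * (t : ℂ)) with hsdef
  have hsq : s ^ 2 = Complex.I * (t : ℂ) := by rw [sq, hsdef, csqrt_mul_self]
  rw [← hsq]
  ring

lemma chi_eq (h ν t : ℝ) : chi h ν t = ((h^2/ν : ℝ) : ℂ) * (Complex.I * t) := by
  unfold chi
  push_cast
  ring

/-- For `θ = 0` the convergence factor blows up at low frequencies:
`ξ(t) → +∞` as `t → 0`, `t ≠ 0`. -/
theorem xi_diverges_theta_zero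
    (νa νo ha ho αc ε : ℝ)
    (hνa : 0 < νa) (hνo : 0 < νo) (hha : 0 < ha) (hho : 0 < ho)
    (hαc : 0 < αc) (hε : 0 < ε) :
    Tendsto (xiZero νa νo ha ho αc ε) (𝓝[≠] (0 : ℝ)) atTop := by
  set ca : ℝ := ha^2/νa with hca_def
  set co : ℝ := ho^2/νo with hco_def
  have hca : 0 < ca := div_pos (pow_pos hha 2) hνa
  have hco : 0 < co := div_pos (pow_pos hho 2) hνo
  set s : ℝ → ℂ := fun t => csqrt (Complex.I * t) with hs_def
  clear_value ca co
  set N : ℝ → ℂ := fun t =>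
    1 + (ε : ℂ) * (ha : ℂ) * Pc co (s t) / ((ho : ℂ) * Pc ca (s t)) with hN_def
  set D : ℝ → ℂ := fun t =>
    2 * (νa : ℂ) * (ca : ℂ) * s t / ((αc : ℂ) * (ha : ℂ) * Pc ca (s t)) with hD_def
  -- basic nonvanishing facts for t ≠ 0
  have key : ∀ t : ℝ, t ≠ 0 → s t ≠ 0 ∧ Pc ca (s t) ≠ 0 ∧
      xiZero νa νo ha ho αc ε t = ‖N t‖ * (‖D t‖)⁻¹ := by
    intro t ht
    have hIt : Complex.I * (t : ℂ) ≠ 0 :=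
      mul_ne_zero Complex.I_ne_zero (by exact_mod_cast ht)
    have hs0 : s t ≠ 0 := csqrt_ne_zero hIt
    have hchia : chi ha νa t = (ca : ℂ) * (Complex.I * t) := by
      rw [chi_eq, ← hca_def]
    have hchio : chi ho νo t = (co : ℂ) * (Complex.I * t) := by
      rw [chi_eq, ← hco_def]
    have hchia0 : chi ha νa t ≠ 0 := by
      rw [hchia]
      exact mul_ne_zero (by exact_mod_cast hca.ne') hIt
    have hlama : lamM (chi ha νa t) = s t * Pc ca (s t) / 2 := by
      rw [hchia]; exact lamM_eq hca ht
    have hlamo : lamM (chi ho νo t) = s t * Pc co (s t) / 2 := by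
      rw [hchio]; exact lamM_eq hco ht
    have hPa : Pc ca (s t) ≠ 0 := by
      intro h
      exact lamM_ne_zero hchia0 (by rw [hlama, h, mul_zero, zero_div])
    refine ⟨hs0, hPa, ?_⟩
    have hsq : s t * s t = Complex.I * (t : ℂ) := csqrt_mul_self _
    have hho' : (ho : ℂ) ≠ 0 := by exact_mod_cast hho.ne'
    have hνa' : (νa : ℂ) ≠ 0 := by exact_mod_cast hνa.ne'
    have hαc' : (αc : ℂ) ≠ 0 := by exact_mod_cast hαc.ne'
    have hha' : (ha : ℂ) ≠ 0 := by exact_mod_cast hha.ne'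
    have hca' : (ca : ℂ) ≠ 0 := by exact_mod_cast hca.ne'
    have hlam' : s t * Pc ca (s t) / 2 ≠ 0 :=
      div_ne_zero (mul_ne_zero hs0 hPa) two_ne_zero
    have hden1 : (ho : ℂ) * (s t * Pc ca (s t) / 2) ≠ 0 := mul_ne_zero hho' hlam'
    have hden2 : (ho : ℂ) * Pc ca (s t) ≠ 0 := mul_ne_zero hho' hPa
    have hden3 : (αc : ℂ) * (ha : ℂ) * (s t * Pc ca (s t) / 2) ≠ 0 :=
      mul_ne_zero (mul_ne_zero hαc' hha') hlam'
    have hden4 : (αc : ℂ) * (ha : ℂ) * Pc ca (s t) ≠ 0 :=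
      mul_ne_zero (mul_ne_zero hαc' hha') hPa
    have hNum : (ε : ℂ) * (ha : ℂ) * (s t * Pc co (s t) / 2)
          / ((ho : ℂ) * (s t * Pc ca (s t) / 2))
        = (ε : ℂ) * (ha : ℂ) * Pc co (s t) / ((ho : ℂ) * Pc ca (s t)) := by
      rw [div_eq_div_iff hden1 hden2]
      ring
    have hDen : (νa : ℂ) * ((ca : ℂ) * (s t * s t))
          / ((αc : ℂ) * (ha : ℂ) * (s t * Pc ca (s t) / 2))
        = 2 * (νa : ℂ) * (ca : ℂ) * s t / ((αc : ℂ) * (ha : ℂ) * Pc ca (s t)) := by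
      rw [div_eq_div_iff hden3 hden4]
      ring
    have hEq : (1 + (ε : ℂ) * (ha : ℂ) * lamM (chi ho νo t)
          / ((ho : ℂ) * lamM (chi ha νa t)))
        / ((νa : ℂ) * chi ha νa t / ((αc : ℂ) * (ha : ℂ) * lamM (chi ha νa t)))
        = N t / D t := by
      rw [hlama, hlamo, hchia, ← hsq, hNum, hDen]
    rw [xiZero, hEq, norm_div, div_eq_mul_inv]
  -- limit of s
  have hs_tendsto : Tendsto s (𝓝[≠] (0:ℝ)) (𝓝 0) := by
    rw [tendsto_zero_iff_norm_tendsto_zero]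
    have habs : ∀ t : ℝ, ‖s t‖ = Real.sqrt |t| := by
      intro t
      have : s t = (Complex.I * t) ^ ((((1:ℝ)/2 : ℝ)) : ℂ) := by
        rw [hs_def]; norm_num [csqrt]
      rw [this, Complex.norm_cpow_real, norm_mul, Complex.norm_I,
        Complex.norm_real, Real.norm_eq_abs, one_mul, ← Real.sqrt_eq_rpow]
    simp only [habs]
    have : Tendsto (fun t : ℝ => Real.sqrt |t|) (𝓝 0) (𝓝 0) := by
      have h := (Real.continuous_sqrt.comp continuous_abs).tendsto 0
      simpa [Function.comp_def] using h
    exact this.mono_left nhdsWithin_le_nhds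
  -- limits of the P functions
  have hPa_t : Tendsto (fun t => Pc ca (s t)) (𝓝[≠] (0:ℝ)) (𝓝 (Pc ca 0)) :=
    (Pc_continuousAt ca).tendsto.comp hs_tendsto
  have hPo_t : Tendsto (fun t => Pc co (s t)) (𝓝[≠] (0:ℝ)) (𝓝 (Pc co 0)) :=
    (Pc_continuousAt co).tendsto.comp hs_tendsto
  have hsca : (0:ℝ) < Real.sqrt ca := Real.sqrt_pos.mpr hca
  have hsco : (0:ℝ) < Real.sqrt co := Real.sqrt_pos.mpr hco
  have hPa0 : Pc ca 0 ≠ 0 := by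
    rw [Pc_zero]
    simp only [ne_eq, neg_eq_zero]
    exact_mod_cast (by positivity : (2 * Real.sqrt ca : ℝ) ≠ 0)
  -- limit of N
  have hPa0' : (ho : ℂ) * Pc ca 0 ≠ 0 :=
    mul_ne_zero (by exact_mod_cast hho.ne') hPa0
  have hNlim : Tendsto N (𝓝[≠] (0:ℝ))
      (𝓝 (1 + (ε : ℂ) * (ha : ℂ) * Pc co 0 / ((ho : ℂ) * Pc ca 0))) := by
    rw [hN_def]
    exact tendsto_const_nhds.add
      ((tendsto_const_nhds.mul hPo_t).div (tendsto_const_nhds.mul hPa_t) hPa0')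
  -- the limit value of N is a positive real
  set LR : ℝ := 1 + (ε * ha / ho) * (Real.sqrt co / Real.sqrt ca) with hLR_def
  have hLRpos : 0 < LR := by
    rw [hLR_def]
    have : 0 < (ε * ha / ho) * (Real.sqrt co / Real.sqrt ca) := by positivity
    linarith
  have hLval : (1 + (ε : ℂ) * (ha : ℂ) * Pc co 0 / ((ho : ℂ) * Pc ca 0)) = ((LR : ℝ) : ℂ) := by
    rw [Pc_zero, Pc_zero, hLR_def]
    have hsca' : (Real.sqrt ca : ℂ) ≠ 0 := by exact_mod_cast hsca.ne'
    have hho' : (ho : ℂ) ≠ 0 := by exact_mod_cast hho.ne'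
    push_cast
    field_simp
  have hNabs : Tendsto (fun t => ‖N t‖) (𝓝[≠] (0:ℝ)) (𝓝 LR) := by
    have := (continuous_norm.tendsto _).comp hNlim
    rw [hLval] at this
    simpa [Function.comp_def, Complex.norm_real, abs_of_pos hLRpos] using this
  -- limit of |D| : to 0 from the right
  have hPa0'' : (αc : ℂ) * (ha : ℂ) * Pc ca 0 ≠ 0 :=
    mul_ne_zero (mul_ne_zero (by exact_mod_cast hαc.ne') (by exact_mod_cast hha.ne')) hPa0
  have hDlim : Tendsto D (𝓝[≠] (0:ℝ)) (𝓝 0) := by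
    rw [hD_def]
    have h := ((tendsto_const_nhds (x := 2 * (νa : ℂ) * (ca : ℂ))
      (f := 𝓝[≠] (0:ℝ))).mul hs_tendsto).div (tendsto_const_nhds.mul hPa_t) hPa0''
    rw [mul_zero, zero_div] at h
    exact h
  have hDabs : Tendsto (fun t => ‖D t‖) (𝓝[≠] (0:ℝ)) (𝓝 0) := by
    have := (continuous_norm.tendsto 0).comp hDlim
    simpa [Function.comp_def] using this
  have hDpos : ∀ᶠ t in 𝓝[≠] (0:ℝ), 0 < ‖D t‖ := by
    filter_upwards [self_mem_nhdsWithin] with t ht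
    have ht' : t ≠ 0 := ht
    obtain ⟨hs0, hPa, -⟩ := key t ht'
    have hC : 2 * (νa : ℂ) * (ca : ℂ) ≠ 0 := by
      have : (2 * νa * ca : ℝ) ≠ 0 := by positivity
      exact_mod_cast this
    have hC2 : (αc : ℂ) * (ha : ℂ) * Pc ca (s t) ≠ 0 :=
      mul_ne_zero (mul_ne_zero (by exact_mod_cast hαc.ne') (by exact_mod_cast hha.ne')) hPa
    have : D t ≠ 0 := by
      rw [hD_def]
      exact div_ne_zero (mul_ne_zero hC hs0) hC2
    exact norm_pos_iff.mpr this
  have hDwithin : Tendsto (fun t => ‖D t‖) (𝓝[≠] (0:ℝ)) (𝓝[>] 0) :=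
    tendsto_nhdsWithin_of_tendsto_nhds_of_eventually_within _ hDabs hDpos
  have hinv : Tendsto (fun t => (‖D t‖)⁻¹) (𝓝[≠] (0:ℝ)) atTop :=
    tendsto_inv_nhdsGT_zero.comp hDwithin
  have hmain : Tendsto (fun t => ‖N t‖ * (‖D t‖)⁻¹)
      (𝓝[≠] (0:ℝ)) atTop := Filter.Tendsto.pos_mul_atTop hLRpos hNabs hinv
  refine hmain.congr' ?_
  filter_upwards [self_mem_nhdsWithin] with t ht
  exact ((key t ht).2.2).symm
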